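/- Fix integers d ≥ 1, J ≥ 1, δ ≥ 1 and L ≥ 0, and let A and B be real matrices indexed by Λ × Λ. Assume (i) every column of A has at most L non-zero entries, and (ii) B[(j,e,l),(j',e',l')] ≠ 0 implies S(j,l) ∩ S(j',l') ≠ ∅. Then the number of non-zero entries of the product AB is at most 2·(2^d − 1)·2^d·δ^d·L·J·2^{dJ}, i.e. at most (2(2^d−1)2^d/d)·δ^d·L·N·log₂ N with N = 2^{dJ}. -/

import Mathlib

/-- The support box `S(j,l)` at scale `j` and translation `l`, for `J` scales and a mother
wavelet supported on a hypercube of sidelength `2δ`. -/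
def suppBox (d J δ j : ℕ) (l : Fin d → ℤ) : Set (Fin d → ℤ) :=
  {x | ∀ i, -((2 ^ (J - j) - 1) * ((δ : ℤ) - 1)) + 2 ^ (J - j) * l i ≤ x i ∧
        x i ≤ (2 ^ (J - j) - 1) * (δ : ℤ) + 2 ^ (J - j) * l i}

/-- The set `Λ` of wavelet indices `(j,e,l)` with `0 ≤ j ≤ J-1`, `e ∈ {0,1}^d ∖ {0}` and
`l ∈ T_j = {0,…,2^j-1}^d`, realized as a subtype. -/
def Lam (d J : ℕ) : Type :=
  {p : Fin J × (Fin d → Bool) × (Fin d → Fin (2 ^ J)) //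
    p.2.1 ≠ (fun _ => false) ∧ ∀ i, (p.2.2 i : ℕ) < 2 ^ (p.1 : ℕ)}

noncomputable instance (d J : ℕ) : Fintype (Lam d J) := by
  unfold Lam; exact Subtype.fintype _

/-!
A nonzero entry `(A * B) λ μ` needs some `ν` with `A λ ν ≠ 0` and `B ν μ ≠ 0`, so `A * B` has at
most `L` times as many nonzero entries as there are pairs of wavelets with intersecting support boxes.
Those pairs are counted scale by scale: for scales `j, j'` and directions `e, e'` the box condition
splits into `d` one-dimensional interval conditions, and the number of pairs of overlapping
intervals at scales `j, j'` is at most `2δ 2^J f(x_j, x_j')`, where `x_j = 2^(j-J)` and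
`f(x, y) = x (1 - y) + (1 - x) y`. Expanding `f^d` binomially gives
`∑_{j,j'} f^d = ∑_r C(d,r) A_r A_(d-r)` with `A_r = ∑_j x_j^r (1 - x_j)^(d-r)`. The termwise
inequality `(2^d - 1) A_r A_(d-r) ≤ A_r + A_(d-r)` and the identity `∑_r C(d,r) A_r = J` then
give `∑_{j,j'} f^d ≤ 2J / (2^d - 1)`.
-/

open Finset

theorem Finset.card_mul_le_of_forall_mul_mem_Icc {K : Type*} [CommRing K] [LinearOrder K]
    [IsStrictOrderedRing K] {S : Finset ℕ} {m c₁ c₂ : K} (hm : 0 < m) (hc : c₁ ≤ c₂)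
    (hS : ∀ b ∈ S, m * b ∈ Set.Icc c₁ c₂) : #S * m ≤ c₂ - c₁ + m := by
  rcases S.eq_empty_or_nonempty with rfl | hne
  · simp only [card_empty, Nat.cast_zero, zero_mul]
    linarith
  set lo := S.min' hne
  set hi := S.max' hne
  have hcard : #S ≤ hi + 1 - lo := by
    rw [← Nat.card_Icc]
    exact card_le_card fun b hb => mem_Icc.2 ⟨S.min'_le b hb, S.le_max' b hb⟩
  have hlo : lo ≤ hi := S.min'_le_max' hne
  have hwidth : m * hi - m * lo ≤ c₂ - c₁ :=
    sub_le_sub (hS hi (S.max'_mem hne)).2 (hS lo (S.min'_mem hne)).1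
  calc (#S : K) * m ≤ ((hi + 1 - lo : ℕ) : K) * m := by gcongr
    _ = m * hi - m * lo + m := by rw [Nat.cast_sub (by omega)]; push_cast; ring
    _ ≤ c₂ - c₁ + m := by linarith

theorem Matrix.card_mul_ne_zero_le {l m n R : Type*} [Fintype l] [Fintype m] [Fintype n]
    [DecidableEq l] [DecidableEq n] [NonUnitalNonAssocSemiring R] [DecidableEq R]
    (A : Matrix l m R) (B : Matrix m n R) {L : ℕ} (hA : ∀ k, #{i | A i k ≠ 0} ≤ L) :
    #{p : l × n | (A * B) p.1 p.2 ≠ 0} ≤ L * #{q : m × n | B q.1 q.2 ≠ 0} := by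
  have hsub : ({p : l × n | (A * B) p.1 p.2 ≠ 0} : Finset _) ⊆
      ({q : m × n | B q.1 q.2 ≠ 0} : Finset _).biUnion
        fun q => ({i | A i q.1 ≠ 0} : Finset _) ×ˢ {q.2} := by
    intro p hp
    obtain ⟨k, -, hk⟩ := exists_ne_zero_of_sum_ne_zero
      (by simpa [Matrix.mul_apply] using (mem_filter.1 hp).2)
    exact mem_biUnion.2 ⟨(k, p.2), by simpa using right_ne_zero_of_mul hk,
      mem_product.2 ⟨by simpa using left_ne_zero_of_mul hk, mem_singleton_self _⟩⟩
  calc _ ≤ _ := card_le_card hsub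
    _ ≤ ∑ q ∈ {q : m × n | B q.1 q.2 ≠ 0}, #(({i | A i q.1 ≠ 0} : Finset _) ×ˢ {q.2}) :=
      card_biUnion_le
    _ ≤ ∑ q ∈ {q : m × n | B q.1 q.2 ≠ 0}, L :=
      sum_le_sum fun q _ => by rw [card_product, card_singleton, mul_one]; exact hA q.1
    _ = L * _ := by rw [sum_const, smul_eq_mul, mul_comm]

theorem mul_mul_le_add_of_le_of_le {K : Type*} [Field K] [LinearOrder K] [IsStrictOrderedRing K]
    {N a b α β : K} (ha : 0 ≤ a) (hb : 0 ≤ b) (hα : 0 < α) (hβ : 0 < β) (haα : a ≤ α)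
    (hbβ : b ≤ β) (hN : N ≤ 1 / α + 1 / β) :
    N * (a * b) ≤ a + b :=
  calc N * (a * b) ≤ (1 / α + 1 / β) * (a * b) := by gcongr
    _ = a / α * b + b / β * a := by ring
    _ ≤ 1 * b + 1 * a := by gcongr <;> rwa [div_le_one₀ (by assumption)]
    _ = a + b := by ring

theorem Lam.ext {d J : ℕ} {w w' : Lam d J} (hj : (w.1.1 : ℕ) = w'.1.1)
    (he : w.1.2.1 = w'.1.2.1) (hl : ∀ i, (w.1.2.2 i : ℕ) = w'.1.2.2 i) : w = w' :=
  Subtype.ext (Prod.ext (Fin.ext hj) (Prod.ext he (funext fun i => Fin.ext (hl i))))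

namespace SparseProduct

def boxLo (J δ j : ℕ) (a : ℤ) : ℤ := -((2 ^ (J - j) - 1) * ((δ : ℤ) - 1)) + 2 ^ (J - j) * a

def boxHi (J δ j : ℕ) (a : ℤ) : ℤ := (2 ^ (J - j) - 1) * (δ : ℤ) + 2 ^ (J - j) * a

lemma mem_suppBox_iff {d J δ j : ℕ} {l x : Fin d → ℤ} :
    x ∈ suppBox d J δ j l ↔ ∀ i, boxLo J δ j (l i) ≤ x i ∧ x i ≤ boxHi J δ j (l i) :=
  Iff.rfl

abbrev IntervalsOverlap (J δ j j' a b : ℕ) : Prop :=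
  boxLo J δ j a ≤ boxHi J δ j' b ∧ boxLo J δ j' b ≤ boxHi J δ j a

def overlapPairs (J δ j j' : ℕ) : Finset (ℕ × ℕ) :=
  {ab ∈ range (2 ^ j) ×ˢ range (2 ^ j') | IntervalsOverlap J δ j j' ab.1 ab.2}

def waveletBox {d J : ℕ} (δ : ℕ) (w : Lam d J) : Set (Fin d → ℤ) :=
  suppBox d J δ w.1.1 fun i => ((w.1.2.2 i : ℕ) : ℤ)

lemma card_le_of_waveletBox_inter_nonempty {d J δ : ℕ} {s : Finset (Lam d J × Lam d J)}
    (hs : ∀ p ∈ s, (waveletBox δ p.1 ∩ waveletBox δ p.2).Nonempty) :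
    #s ≤ ∑ jj ∈ range J ×ˢ range J, (2 ^ d - 1) ^ 2 * #(overlapPairs J δ jj.1 jj.2) ^ d := by
  classical
  set E : Finset (Fin d → Bool) := univ.erase fun _ => false
  have hE : #E = 2 ^ d - 1 := by simp [E, card_erase_of_mem]
  let code :
      Lam d J × Lam d J → Σ _ : ℕ × ℕ, (Fin d → Bool) × (Fin d → Bool) × (Fin d → ℕ × ℕ) :=
    fun p => ⟨(p.1.1.1, p.2.1.1), p.1.1.2.1, p.2.1.2.1, fun i => (p.1.1.2.2 i, p.2.1.2.2 i)⟩
  calc #s ≤ #((range J ×ˢ range J).sigma fun jj =>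
        E ×ˢ E ×ˢ Fintype.piFinset fun _ => overlapPairs J δ jj.1 jj.2) := by
        refine card_le_card_of_injOn code (fun p hp => ?_) (fun p _ q _ hpq => ?_)
        · obtain ⟨x, hx₁, hx₂⟩ := hs p hp
          rw [waveletBox, mem_suppBox_iff] at hx₁ hx₂
          simp only [code, coe_sigma, Set.mem_sigma_iff, coe_product, Set.mem_prod, mem_coe,
            mem_range]
          exact ⟨⟨p.1.1.1.isLt, p.2.1.1.isLt⟩, mem_erase.2 ⟨p.1.2.1, mem_univ _⟩,
            mem_erase.2 ⟨p.2.2.1, mem_univ _⟩, Fintype.mem_piFinset.2 fun i =>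
              mem_filter.2 ⟨mem_product.2 ⟨mem_range.2 (p.1.2.2 i), mem_range.2 (p.2.2.2 i)⟩,
                (hx₁ i).1.trans (hx₂ i).2, (hx₂ i).1.trans (hx₁ i).2⟩⟩
        · simp only [code, Sigma.mk.inj_iff, Prod.mk.injEq, heq_eq_eq] at hpq
          obtain ⟨⟨hj₁, hj₂⟩, he₁, he₂, hl⟩ := hpq
          exact Prod.ext (Lam.ext hj₁ he₁ fun i => (Prod.ext_iff.1 (congrFun hl i)).1)
            (Lam.ext hj₂ he₂ fun i => (Prod.ext_iff.1 (congrFun hl i)).2)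
    _ = ∑ jj ∈ range J ×ˢ range J, (2 ^ d - 1) ^ 2 * #(overlapPairs J δ jj.1 jj.2) ^ d := by
        rw [card_sigma]
        refine sum_congr rfl fun jj _ => ?_
        rw [card_product, card_product, Fintype.card_piFinset, prod_const, card_univ,
          Fintype.card_fin, hE, sq, mul_assoc]

noncomputable def scaleFrac (J j : ℕ) : ℝ := 2 ^ j / 2 ^ J

lemma scaleFrac_nonneg (J j : ℕ) : 0 ≤ scaleFrac J j := by unfold scaleFrac; positivity

lemma scaleFrac_le_half {J j : ℕ} (hj : j < J) : scaleFrac J j ≤ 1 / 2 := by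
  rw [scaleFrac, div_le_div_iff₀ (by positivity) two_pos, one_mul, ← pow_succ]
  exact pow_le_pow_right₀ one_le_two hj

lemma scaleFrac_add_two (n j : ℕ) : scaleFrac (n + 2) j = scaleFrac n j / 4 := by
  rw [scaleFrac, scaleFrac, pow_add]; ring

lemma scaleFrac_eq_one_div {J j : ℕ} (h : j ≤ J) : scaleFrac J j = 1 / 2 ^ (J - j) := by
  rw [scaleFrac, pow_sub₀ _ two_ne_zero h]
  field_simp

noncomputable def pairWeight (J j j' : ℕ) : ℝ :=
  scaleFrac J j * (1 - scaleFrac J j') + (1 - scaleFrac J j) * scaleFrac J j'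

lemma card_overlapPairs_le {J δ j j' : ℕ} (hδ : 1 ≤ δ) (hj : j < J) (hj' : j' ≤ J) :
    (#(overlapPairs J δ j j') : ℝ) ≤ 2 * δ * 2 ^ J * pairWeight J j j' := by
  set m : ℝ := 2 ^ (J - j)
  set m' : ℝ := 2 ^ (J - j')
  have hm : (2 : ℝ) ≤ m := le_self_pow₀ one_le_two (by omega)
  have hm' : (1 : ℝ) ≤ m' := one_le_pow₀ one_le_two
  have hδ' : (1 : ℝ) ≤ δ := by exact_mod_cast hδ
  -- for fixed `a`, overlap confines `m' b` to a window of width `(2δ - 1)(m + m' - 2)`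
  have hfiber : ∀ a : ℕ, (#{b ∈ range (2 ^ j') | IntervalsOverlap J δ j j' a b} : ℝ) * m' ≤
      (2 * δ - 1) * (m + m' - 2) + m' := fun a => by
    refine (card_mul_le_of_forall_mul_mem_Icc (c₁ := m * a - (m - 1) * (δ - 1) - (m' - 1) * δ)
      (c₂ := m * a + (m - 1) * δ + (m' - 1) * (δ - 1)) (by positivity) (by nlinarith)
      fun b hb => ?_).trans_eq (by ring : _ = (2 * (δ : ℝ) - 1) * (m + m' - 2) + m')
    obtain ⟨h₁, h₂⟩ := (mem_filter.1 hb).2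
    have h₁ := (Int.cast_le (R := ℝ)).2 h₁
    have h₂ := (Int.cast_le (R := ℝ)).2 h₂
    push_cast [boxLo, boxHi] at h₁ h₂
    constructor <;> linarith
  have hcard :
      (#(overlapPairs J δ j j') : ℝ) * m' ≤ 2 ^ j * ((2 * δ - 1) * (m + m' - 2) + m') := by
    have : #(overlapPairs J δ j j') =
        ∑ a ∈ range (2 ^ j), #{b ∈ range (2 ^ j') | IntervalsOverlap J δ j j' a b} := by
      simp only [overlapPairs, card_filter, sum_product]
    rw [this, Nat.cast_sum, sum_mul]
    exact (sum_le_sum fun a _ => hfiber a).trans_eq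
      (by rw [sum_const, card_range, nsmul_eq_mul, Nat.cast_pow, Nat.cast_ofNat])
  have hweight : 2 * δ * 2 ^ J * pairWeight J j j' = 2 * δ * 2 ^ j * (m + m' - 2) / m' := by
    have h2J : (2 : ℝ) ^ J = 2 ^ j * m := by rw [← pow_add, Nat.add_sub_cancel' hj.le]
    rw [pairWeight, scaleFrac_eq_one_div hj.le, scaleFrac_eq_one_div hj', h2J]
    field_simp
    ring
  rw [hweight, le_div_iff₀ (by positivity)]
  nlinarith [pow_pos (two_pos : (0 : ℝ) < 2) j]

noncomputable def binomMoment (d J r : ℕ) : ℝ :=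
  ∑ j ∈ range J, scaleFrac J j ^ r * (1 - scaleFrac J j) ^ (d - r)

lemma binomMoment_nonneg (d J r : ℕ) : 0 ≤ binomMoment d J r :=
  sum_nonneg fun j hj => by
    have := scaleFrac_le_half (mem_range.1 hj)
    have := scaleFrac_nonneg J j
    have : 0 ≤ 1 - scaleFrac J j := by linarith
    positivity

lemma sub_one_mul_sum_scaleFrac_pow (J t : ℕ) :
    (2 ^ t - 1) * ∑ j ∈ range J, scaleFrac J j ^ t = 1 - (1 / 2 ^ J) ^ t := by
  have hq : ((2 : ℝ) ^ t) ^ J ≠ 0 := by positivity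
  have hterm : ∀ j, scaleFrac J j ^ t = ((2 : ℝ) ^ t) ^ j / ((2 : ℝ) ^ t) ^ J := fun j => by
    rw [scaleFrac, div_pow, ← pow_mul, ← pow_mul, ← pow_mul, ← pow_mul, mul_comm j, mul_comm J]
  simp only [hterm, ← sum_div]
  rw [mul_div_assoc', mul_comm, geom_sum_mul, div_pow, one_pow, ← pow_mul, ← pow_mul,
    mul_comm J t, pow_mul, sub_div, div_self hq]

lemma sum_scaleFrac_pow_le (J : ℕ) {t : ℕ} (ht : 1 ≤ t) :
    ∑ j ∈ range J, scaleFrac J j ^ t ≤ 1 / (2 ^ t - 1) := by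
  have h : (1 : ℝ) < 2 ^ t := one_lt_pow₀ one_lt_two (by omega)
  rw [le_div_iff₀ (by linarith), mul_comm, sub_one_mul_sum_scaleFrac_pow]
  have : 0 ≤ ((1 : ℝ) / 2 ^ J) ^ t := by positivity
  linarith

lemma sum_scaleFrac_pow_sub_pow_succ_le (J : ℕ) {t : ℕ} (ht : 1 ≤ t) :
    ∑ j ∈ range J, (scaleFrac J j ^ t - scaleFrac J j ^ (t + 1)) ≤
      1 / (2 ^ t - 1) - 1 / (2 ^ (t + 1) - 1) := by
  set e : ℝ := 1 / 2 ^ J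
  have he : 0 ≤ e := by positivity
  have he1 : e ≤ 1 := div_le_one_of_le₀ (one_le_pow₀ one_le_two) (by positivity)
  have h1 : (2 : ℝ) ≤ 2 ^ t := le_self_pow₀ one_le_two (by omega)
  have ht' := sub_one_mul_sum_scaleFrac_pow J t
  have ht1' := sub_one_mul_sum_scaleFrac_pow J (t + 1)
  rw [pow_succ, pow_succ e] at ht1'
  rw [sum_sub_distrib, pow_succ, div_sub_div _ _ (by linarith) (by linarith),
    le_div_iff₀ (by nlinarith)]
  have hpow : e ^ t * e ≤ e ^ t := mul_le_of_le_one_right (by positivity) he1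
  nlinarith [hpow, pow_nonneg he t]

lemma binomMoment_self_le (J : ℕ) {d : ℕ} (hd : 1 ≤ d) :
    binomMoment d J d ≤ 1 / (2 ^ d - 1) := by
  simpa [binomMoment] using sum_scaleFrac_pow_le J hd

lemma binomMoment_pred_le (J : ℕ) {d : ℕ} (hd : 2 ≤ d) :
    binomMoment d J (d - 1) ≤ 1 / (2 ^ (d - 1) - 1) - 1 / (2 ^ d - 1) := by
  obtain ⟨t, rfl⟩ : ∃ t, d = t + 1 := ⟨d - 1, by omega⟩
  rw [binomMoment, Nat.add_sub_cancel, show t + 1 - t = 1 by omega]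
  exact (sum_congr rfl fun j _ => by ring).trans_le
    (sum_scaleFrac_pow_sub_pow_succ_le J (by omega))

lemma binomMoment_one_le (J : ℕ) {d : ℕ} (hd : 2 ≤ d) :
    binomMoment d J 1 ≤ 2 ^ (d - 1) / (2 ^ d - 1) := by
  have hd' : (2 : ℝ) ^ d = 2 * 2 ^ (d - 1) := by rw [← pow_succ']; congr 1; omega
  have hh : (2 : ℝ) ≤ 2 ^ (d - 1) := le_self_pow₀ one_le_two (by omega)
  rcases hd.eq_or_lt with rfl | hd3
  · convert sum_scaleFrac_pow_sub_pow_succ_le J (t := 1) le_rfl using 2 with j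
    · simp only [binomMoment]; ring_nf
    · norm_num
  -- for `d ≥ 3`: `A_1 ≤ ∑ x (1 - x)^2 = 10/21 - e + 2e^2/3 - e^3/7 ≤ 1/2` with `e = 2^(-J)`
  have hle : binomMoment d J 1 ≤ ∑ j ∈ range J, scaleFrac J j * (1 - scaleFrac J j) ^ 2 := by
    refine sum_le_sum fun j hj => ?_
    have h₀ := scaleFrac_nonneg J j
    have h₁ := scaleFrac_le_half (mem_range.1 hj)
    rw [pow_one]
    exact mul_le_mul_of_nonneg_left
      (pow_le_pow_of_le_one (by linarith) (by linarith) (by omega)) h₀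
  have hexp : ∑ j ∈ range J, scaleFrac J j * (1 - scaleFrac J j) ^ 2 =
      ∑ j ∈ range J, scaleFrac J j - 2 * ∑ j ∈ range J, scaleFrac J j ^ 2 +
        ∑ j ∈ range J, scaleFrac J j ^ 3 := by
    rw [mul_sum, ← sum_sub_distrib, ← sum_add_distrib]
    exact sum_congr rfl fun j _ => by ring
  have h1 := sub_one_mul_sum_scaleFrac_pow J 1
  have h2 := sub_one_mul_sum_scaleFrac_pow J 2
  have h3 := sub_one_mul_sum_scaleFrac_pow J 3
  set e : ℝ := 1 / 2 ^ J
  have he : 0 ≤ e := by positivity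
  have he1 : e ≤ 1 := div_le_one_of_le₀ (one_le_pow₀ one_le_two) (by positivity)
  norm_num at h1 h2 h3
  have hhalf : binomMoment d J 1 ≤ 1 / 2 := by
    nlinarith [mul_le_mul_of_nonneg_left he1 he, pow_nonneg he 3]
  rw [le_div_iff₀ (by linarith), hd']
  nlinarith

lemma binomMoment_le_of_two_le (J : ℕ) {d r : ℕ} (hr : 2 ≤ r) (hdr : 2 ≤ d - r) :
    binomMoment d J r ≤ (1 / 2) ^ r * ((1 / 2) ^ r + (1 / 2) ^ (d - r)) := by
  have hbound : 0 ≤ (1 / 2 : ℝ) ^ r * ((1 / 2) ^ r + (1 / 2) ^ (d - r)) := by positivity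
  -- the two coarsest scales contribute `2^(-d)` and at most `(9/16) 4^(-r)`, all finer ones
  -- together at most `4^(-r) / 3`
  rcases J with _ | _ | n
  · simpa [binomMoment] using hbound
  · norm_num [binomMoment, scaleFrac]
  have hx : ∀ j ∈ range n, scaleFrac (n + 2) j ^ r * (1 - scaleFrac (n + 2) j) ^ (d - r) ≤
      (1 / 4) ^ r * scaleFrac n j ^ r := fun j hj => by
    have h0 := scaleFrac_nonneg (n + 2) j
    have h1 := scaleFrac_le_half (Nat.lt_add_right 2 (mem_range.1 hj))
    calc _ ≤ scaleFrac (n + 2) j ^ r * 1 := by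
          gcongr; exact pow_le_one₀ (by linarith) (by linarith)
      _ = _ := by rw [mul_one, scaleFrac_add_two]; ring
  have htail : ∑ j ∈ range n, scaleFrac n j ^ r ≤ 1 / 3 := by
    have h4 : (2 : ℝ) ^ 2 ≤ 2 ^ r := pow_le_pow_right₀ one_le_two hr
    refine (sum_scaleFrac_pow_le n (by omega : 1 ≤ r)).trans ?_
    gcongr
    linarith
  have hnext : scaleFrac (n + 2) n = 1 / 4 := by rw [scaleFrac, pow_add]; field_simp; norm_num
  have htop : scaleFrac (n + 2) (n + 1) = 1 / 2 := by
    rw [scaleFrac, pow_succ _ (n + 1)]; field_simp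
  have hsecond : (1 / 4 : ℝ) ^ r * (1 - 1 / 4) ^ (d - r) ≤ (1 / 4) ^ r * (9 / 16) := by
    gcongr
    calc (1 - 1 / 4 : ℝ) ^ (d - r) ≤ (1 - 1 / 4) ^ 2 :=
          pow_le_pow_of_le_one (by norm_num) (by norm_num) hdr
      _ = 9 / 16 := by norm_num
  have hrest :=
    (sum_le_sum hx).trans (by rw [← mul_sum]; gcongr : _ ≤ (1 / 4 : ℝ) ^ r * (1 / 3))
  have hquarter : (1 / 2 : ℝ) ^ r * (1 / 2) ^ r = (1 / 4) ^ r := by rw [← mul_pow]; norm_num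
  rw [binomMoment, sum_range_succ, sum_range_succ, htop, hnext]
  norm_num only at hsecond hrest hquarter ⊢
  nlinarith [pow_nonneg (by norm_num : (0 : ℝ) ≤ 1 / 4) r]

/- Each case bounds `A_r ≤ α` and `A_(d-r) ≤ β` with `1/α + 1/β ≥ 2^d - 1`. For `r = 1` this is
an equality, and the resulting inequality is sharp as `J → ∞` when `d = 2`. -/
lemma sub_one_mul_binomMoment_mul_le_of_le (J : ℕ) {d r : ℕ} (hd : 1 ≤ d) (hr : r ≤ d - r) :
    (2 ^ d - 1) * (binomMoment d J r * binomMoment d J (d - r)) ≤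
      binomMoment d J r + binomMoment d J (d - r) := by
  have hA := binomMoment_nonneg d J
  have hN : (1 : ℝ) < 2 ^ d := one_lt_pow₀ one_lt_two (by omega)
  rcases (show r = 0 ∨ r = 1 ∨ 2 ≤ r by omega) with rfl | rfl | hr2
  · have h := binomMoment_self_le J hd
    rw [le_div_iff₀ (by linarith)] at h
    rw [Nat.sub_zero]
    nlinarith [hA 0, hA d]
  · have hh : (2 : ℝ) ≤ 2 ^ (d - 1) := le_self_pow₀ one_le_two (by omega)
    have hd' : (2 : ℝ) ^ d = 2 * 2 ^ (d - 1) := by rw [← pow_succ']; congr 1; omega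
    have hβ : 1 / ((2 : ℝ) ^ (d - 1) - 1) - 1 / (2 ^ d - 1) =
        2 ^ (d - 1) / ((2 ^ (d - 1) - 1) * (2 ^ d - 1)) := by
      rw [hd', div_sub_div _ _ (by linarith) (by linarith)]
      ring
    refine mul_mul_le_add_of_le_of_le (hA _) (hA _) (by positivity) ?_
      (binomMoment_one_le J (by omega)) (hβ ▸ binomMoment_pred_le J (by omega)) (le_of_eq ?_)
    · rw [hd']
      have : (0 : ℝ) < 2 ^ (d - 1) - 1 := by linarith
      have : (0 : ℝ) < 2 * 2 ^ (d - 1) - 1 := by linarith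
      positivity
    · rw [hd']
      field_simp
      ring
  · set p : ℝ := (1 / 2) ^ r
    set q : ℝ := (1 / 2) ^ (d - r)
    have hpq : p * q = 1 / 2 ^ d := by
      rw [← pow_add, Nat.add_sub_cancel' (by omega : r ≤ d), one_div_pow]
    have hsum : 1 / (p * (p + q)) + 1 / (q * (q + p)) = 2 ^ d := by
      have : 0 < p := by positivity
      have : 0 < q := by positivity
      have h2d : (2 : ℝ) ^ d = 1 / (p * q) := by rw [hpq, one_div_one_div]
      rw [h2d]
      field_simp
      ring
    refine mul_mul_le_add_of_le_of_le (β := q * (q + p)) (hA _) (hA _) (by positivity)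
      (by positivity) (binomMoment_le_of_two_le J hr2 (by omega)) ?_ (by rw [hsum]; linarith)
    have := binomMoment_le_of_two_le J (d := d) (r := d - r) (by omega) (by omega)
    rwa [show d - (d - r) = r by omega] at this

lemma sub_one_mul_binomMoment_mul_le (J : ℕ) {d r : ℕ} (hd : 1 ≤ d) (hr : r ≤ d) :
    (2 ^ d - 1) * (binomMoment d J r * binomMoment d J (d - r)) ≤
      binomMoment d J r + binomMoment d J (d - r) := by
  rcases le_total r (d - r) with h | h
  · exact sub_one_mul_binomMoment_mul_le_of_le J hd h
  · have := sub_one_mul_binomMoment_mul_le_of_le J (r := d - r) hd (by omega)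
    rwa [Nat.sub_sub_self hr, mul_comm (binomMoment d J (d - r)), add_comm] at this

lemma sum_binomMoment_mul_choose (d J : ℕ) :
    ∑ r ∈ range (d + 1), binomMoment d J r * d.choose r = J := by
  simp only [binomMoment, sum_mul]
  rw [sum_comm]
  simp [← add_pow]

lemma sum_sum_pairWeight_pow (d J : ℕ) :
    ∑ j ∈ range J, ∑ j' ∈ range J, pairWeight J j j' ^ d =
      ∑ r ∈ range (d + 1), binomMoment d J r * binomMoment d J (d - r) * d.choose r := by
  simp only [binomMoment, sum_mul, mul_sum, pairWeight, add_pow]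
  refine (sum_congr rfl fun j _ => sum_comm).trans ?_
  rw [sum_comm]
  refine sum_congr rfl fun r hr => ?_
  rw [sum_comm]
  refine sum_congr rfl fun j _ => sum_congr rfl fun j' _ => ?_
  rw [Nat.sub_sub_self (Nat.lt_succ_iff.1 (mem_range.1 hr)), mul_pow, mul_pow]
  ring

lemma sum_sum_pairWeight_pow_le (J : ℕ) {d : ℕ} (hd : 1 ≤ d) :
    ∑ j ∈ range J, ∑ j' ∈ range J, pairWeight J j j' ^ d ≤ 2 * J / (2 ^ d - 1) := by
  have hN : (0 : ℝ) < 2 ^ d - 1 := sub_pos.2 (one_lt_pow₀ one_lt_two (by omega))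
  have hreflect : ∑ r ∈ range (d + 1), binomMoment d J (d - r) * d.choose r = J := by
    rw [← sum_binomMoment_mul_choose d J, ← sum_range_reflect]
    refine sum_congr rfl fun r hr => ?_
    have hr' : r ≤ d := Nat.lt_succ_iff.1 (mem_range.1 hr)
    rw [show d + 1 - 1 - r = d - r by omega, Nat.sub_sub_self hr', Nat.choose_symm hr']
  rw [sum_sum_pairWeight_pow, le_div_iff₀ hN, sum_mul]
  calc ∑ r ∈ range (d + 1),
        binomMoment d J r * binomMoment d J (d - r) * d.choose r * (2 ^ d - 1)
      ≤ ∑ r ∈ range (d + 1), (binomMoment d J r + binomMoment d J (d - r)) * d.choose r :=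
        sum_le_sum fun r hr => by
          have := sub_one_mul_binomMoment_mul_le J hd (Nat.lt_succ_iff.1 (mem_range.1 hr))
          have : (0 : ℝ) ≤ d.choose r := by positivity
          nlinarith
    _ = 2 * J := by
        simp only [add_mul, sum_add_distrib, sum_binomMoment_mul_choose, hreflect]
        ring

lemma sum_card_overlapPairs_pow_le {d : ℕ} (J : ℕ) {δ : ℕ} (hd : 1 ≤ d) (hδ : 1 ≤ δ) :
    ∑ jj ∈ range J ×ˢ range J, (#(overlapPairs J δ jj.1 jj.2) : ℝ) ^ d ≤
      2 * J * (2 * δ * 2 ^ J) ^ d / (2 ^ d - 1) :=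
  calc ∑ jj ∈ range J ×ˢ range J, (#(overlapPairs J δ jj.1 jj.2) : ℝ) ^ d
      ≤ ∑ jj ∈ range J ×ˢ range J, (2 * δ * 2 ^ J * pairWeight J jj.1 jj.2) ^ d :=
        sum_le_sum fun jj hjj => by
          obtain ⟨hj, hj'⟩ := mem_product.1 hjj
          exact pow_le_pow_left₀ (by positivity)
            (card_overlapPairs_le hδ (mem_range.1 hj) (mem_range.1 hj').le) d
    _ = (2 * δ * 2 ^ J) ^ d * ∑ j ∈ range J, ∑ j' ∈ range J, pairWeight J j j' ^ d := by
        simp only [sum_product, mul_sum, mul_pow]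
    _ ≤ (2 * δ * 2 ^ J) ^ d * (2 * J / (2 ^ d - 1)) := by
        gcongr; exact sum_sum_pairWeight_pow_le J hd
    _ = 2 * J * (2 * δ * 2 ^ J) ^ d / (2 ^ d - 1) := by ring

end SparseProduct

open SparseProduct

theorem sparse_product_support_bound_general
    (d J δ L : ℕ) (hd : 1 ≤ d) (hδ : 1 ≤ δ)
    (A B : Matrix (Lam d J) (Lam d J) ℝ)
    (hA : ∀ μ : Lam d J,
      (Finset.univ.filter (fun lam : Lam d J => A lam μ ≠ 0)).card ≤ L)
    (hB : ∀ lam mu : Lam d J, B lam mu ≠ 0 →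
      (suppBox d J δ (lam.1.1 : ℕ) (fun i => ((lam.1.2.2 i : ℕ) : ℤ)) ∩
        suppBox d J δ (mu.1.1 : ℕ) (fun i => ((mu.1.2.2 i : ℕ) : ℤ))).Nonempty) :
    (Finset.univ.filter (fun p : Lam d J × Lam d J => (A * B) p.1 p.2 ≠ 0)).card ≤
      2 * (2 ^ d - 1) * 2 ^ d * δ ^ d * L * J * 2 ^ (d * J) ∧
    ((Finset.univ.filter (fun p : Lam d J × Lam d J => (A * B) p.1 p.2 ≠ 0)).card : ℝ) ≤
      2 * ((2:ℝ) ^ d - 1) * 2 ^ d / d * δ ^ d * L * ((2 ^ (d * J) : ℕ) : ℝ) *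
        Real.logb 2 ((2 ^ (d * J) : ℕ) : ℝ) := by
  classical
  have hsupp := card_le_of_waveletBox_inter_nonempty (δ := δ) (s := {q | B q.1 q.2 ≠ 0})
    fun q hq => hB q.1 q.2 (mem_filter.1 hq).2
  have hcount := (Matrix.card_mul_ne_zero_le A B hA).trans (Nat.mul_le_mul_left L hsupp)
  have hbound : ((2 * (2 ^ d - 1) * 2 ^ d * δ ^ d * L * J * 2 ^ (d * J) : ℕ) : ℝ) =
      L * ((2 ^ d - 1) ^ 2 * (2 * J * (2 * δ * 2 ^ J) ^ d / (2 ^ d - 1))) := by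
    push_cast [Nat.cast_sub Nat.one_le_two_pow]
    field_simp
    ring
  have hreal := calc
    (#{p : Lam d J × Lam d J | (A * B) p.1 p.2 ≠ 0} : ℝ) ≤ ((L * ∑ jj ∈ range J ×ˢ range J,
        (2 ^ d - 1) ^ 2 * #(overlapPairs J δ jj.1 jj.2) ^ d : ℕ) : ℝ) := by exact_mod_cast hcount
    _ = L * ((2 ^ d - 1) ^ 2 *
        ∑ jj ∈ range J ×ˢ range J, (#(overlapPairs J δ jj.1 jj.2) : ℝ) ^ d) := by
      push_cast [Nat.cast_sub Nat.one_le_two_pow]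
      simp only [mul_sum]
    _ ≤ _ := by gcongr; exact sum_card_overlapPairs_pow_le J hd hδ
    _ = _ := hbound.symm
  refine ⟨by exact_mod_cast hreal, hreal.trans_eq ?_⟩
  rw [Nat.cast_pow, Nat.cast_ofNat, Real.logb_pow, Real.logb_self_eq_one one_lt_two]
  push_cast [Nat.cast_sub Nat.one_le_two_pow]
  field_simp

/-- Sparsity of the product `Ã_k B_k`: if every column of `A` has at most `L` non-zero
entries and the support of `B` is contained in the pairs of wavelet indices with
intersecting support boxes, then the number of non-zero entries of `A * B` is at most
`2 (2^d-1) 2^d δ^d L J 2^{dJ} = (2 (2^d-1) 2^d / d) δ^d L N log₂ N` with `N = 2^{dJ}`. -/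
theorem sparse_product_support_bound
    (d J δ L : ℕ) (hd : 1 ≤ d) (hJ : 1 ≤ J) (hδ : 1 ≤ δ)
    (A B : Matrix (Lam d J) (Lam d J) ℝ)
    (hA : ∀ μ : Lam d J,
      (Finset.univ.filter (fun lam : Lam d J => A lam μ ≠ 0)).card ≤ L)
    (hB : ∀ lam mu : Lam d J, B lam mu ≠ 0 →
      (suppBox d J δ (lam.1.1 : ℕ) (fun i => ((lam.1.2.2 i : ℕ) : ℤ)) ∩
        suppBox d J δ (mu.1.1 : ℕ) (fun i => ((mu.1.2.2 i : ℕ) : ℤ))).Nonempty) :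
    (Finset.univ.filter (fun p : Lam d J × Lam d J => (A * B) p.1 p.2 ≠ 0)).card ≤
      2 * (2 ^ d - 1) * 2 ^ d * δ ^ d * L * J * 2 ^ (d * J) ∧
    ((Finset.univ.filter (fun p : Lam d J × Lam d J => (A * B) p.1 p.2 ≠ 0)).card : ℝ) ≤
      2 * ((2:ℝ) ^ d - 1) * 2 ^ d / d * δ ^ d * L * ((2 ^ (d * J) : ℕ) : ℝ) *
        Real.logb 2 ((2 ^ (d * J) : ℕ) : ℝ) :=
  sparse_product_support_bound_general d J δ L hd hδ A B hA hB
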